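/- arXiv:1804.02624 — 3 statements merged into one kernel-verified Lean document; each statement's English description precedes it below -/
import Mathlib

section
/- (Asymptotic Theorem 1.) Fix t ≥ 0 and ε > 0. For each positive integer k, let (Ω_k, μ_k) be a probability space and X^{(k)} : Ω_k → ℝ^k a random vector with components in L⁴(μ_k), mean vector m^{(k)}, and average variance v_k := (1/k) ∑_i Var(X^{(k)}_i), such that for every i ≤ k, ∑_{j=1}^k cov((X^{(k)}_i − m^{(k)}_i)², (X^{(k)}_j − m^{(k)}_j)²) ≤ t. Then μ_k{ |‖X^{(k)} − m^{(k)}‖²/k − v_k| ≥ ε } → 0 as k → ∞; i.e., the normalized squared distance of instances from the centroid is almost surely the average variance, so the instances form a thin shell about the centroid. -/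
open MeasureTheory ProbabilityTheory Filter

/-- Covariance of two real-valued random variables: `cov (U, V) = E[UV] − E[U]·E[V]`. -/
noncomputable def cov {Ω : Type*} [MeasurableSpace Ω] (μ : Measure Ω) (U V : Ω → ℝ) : ℝ :=
  (∫ ω, U ω * V ω ∂μ) - (∫ ω, U ω ∂μ) * (∫ ω, V ω ∂μ)

/-! The squared centred coordinates `Yᵢ = (Xᵢ - mᵢ)²` lie in `L²` because `Xᵢ ∈ L⁴`, so
`‖X - m‖² / k = (1/k) ∑ Yᵢ` is a sample mean with expectation `v_k`. The row-sum bound on the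
covariances of the `Yᵢ` bounds its variance by `t / k`, and Chebyshev's inequality bounds the
probability of an `ε`-deviation by `t / (ε² k) → 0`. -/

lemma MeasureTheory.MemLp.sq_of_memLp_four {α : Type*} [MeasurableSpace α] {μ : Measure α}
    {f : α → ℝ} (hf : MemLp f 4 μ) : MemLp (fun x => f x ^ 2) 2 μ := by
  refine (memLp_two_iff_integrable_sq (hf.aestronglyMeasurable.pow 2)).2 ?_
  have h4 := (show MemLp f (4 : ℕ) μ from mod_cast hf).integrable_norm_pow (by norm_num)
  simpa [← pow_mul, (by decide : Even 4).pow_abs] using h4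

section SampleMean

variable {Ω : Type*} [MeasurableSpace Ω] {μ : Measure Ω} [IsProbabilityMeasure μ]

lemma cov_eq_covariance {U V : Ω → ℝ} (hU : MemLp U 2 μ) (hV : MemLp V 2 μ) :
    cov μ U V = cov[U, V; μ] :=
  (covariance_eq_sub hU hV).symm

variable {ι : Type*} [Fintype ι] {Y : ι → Ω → ℝ}

lemma variance_sum_le_card_mul (hY : ∀ i, MemLp (Y i) 2 μ) {t : ℝ}
    (hrow : ∀ i, ∑ j, cov[Y i, Y j; μ] ≤ t) :
    Var[fun ω => ∑ i, Y i ω; μ] ≤ (Fintype.card ι : ℝ) * t := by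
  rw [variance_fun_sum hY]
  calc ∑ i, ∑ j, cov[Y i, Y j; μ] ≤ ∑ _i : ι, t := Finset.sum_le_sum fun i _ => hrow i
    _ = (Fintype.card ι : ℝ) * t := by simp

lemma measure_abs_sampleMean_sub_ge_le (hY : ∀ i, MemLp (Y i) 2 μ) {t : ℝ}
    (hrow : ∀ i, ∑ j, cov[Y i, Y j; μ] ≤ t) {ε : ℝ} (hε : 0 < ε) :
    μ {ω | ε ≤ |(Fintype.card ι : ℝ)⁻¹ * ∑ i, Y i ω - (Fintype.card ι : ℝ)⁻¹ * ∑ i, μ[Y i]|}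
      ≤ ENNReal.ofReal (t / ε ^ 2 / Fintype.card ι) := by
  set n : ℝ := (Fintype.card ι : ℝ)
  have hmean : μ[fun ω => n⁻¹ * ∑ i, Y i ω] = n⁻¹ * ∑ i, μ[Y i] := by
    rw [integral_const_mul, integral_finsetSum _ fun i _ => (hY i).integrable one_le_two]
  have hvar : Var[fun ω => n⁻¹ * ∑ i, Y i ω; μ] ≤ t / n := by
    rw [variance_const_mul]
    calc n⁻¹ ^ 2 * Var[fun ω => ∑ i, Y i ω; μ] ≤ n⁻¹ ^ 2 * (n * t) := by
          gcongr; exact variance_sum_le_card_mul hY hrow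
      _ = t / n := by
          rcases eq_or_ne n 0 with hn | hn
          · simp [hn]
          · field_simp
  have hS : MemLp (fun ω => n⁻¹ * ∑ i, Y i ω) 2 μ :=
    (memLp_finsetSum Finset.univ fun i _ => hY i).const_mul _
  calc _ ≤ ENNReal.ofReal (Var[fun ω => n⁻¹ * ∑ i, Y i ω; μ] / ε ^ 2) := by
        simpa only [hmean] using meas_ge_le_variance_div_sq hS hε
    _ ≤ ENNReal.ofReal (t / ε ^ 2 / n) := by
        rw [div_right_comm]
        gcongr

lemma measure_abs_normSq_div_sub_ge_le {X : Ω → EuclideanSpace ℝ ι}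
    (hX : ∀ i, MemLp (fun ω => X ω i) 4 μ) {m : EuclideanSpace ℝ ι}
    (hm : ∀ i, m i = μ[fun ω => X ω i]) {t : ℝ}
    (hcov : ∀ i, ∑ j, cov μ (fun ω => (X ω i - m i) ^ 2) (fun ω => (X ω j - m j) ^ 2) ≤ t)
    {ε : ℝ} (hε : 0 < ε) :
    μ {ω | ε ≤ |‖X ω - m‖ ^ 2 / Fintype.card ι
        - (Fintype.card ι : ℝ)⁻¹ * ∑ i, Var[fun ω => X ω i; μ]|}
      ≤ ENNReal.ofReal (t / ε ^ 2 / Fintype.card ι) := by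
  set Y : ι → Ω → ℝ := fun i ω => (X ω i - m i) ^ 2
  have hY : ∀ i, MemLp (Y i) 2 μ := fun i => ((hX i).sub (memLp_const _)).sq_of_memLp_four
  have hnorm : ∀ ω, ‖X ω - m‖ ^ 2 = ∑ i, Y i ω := fun ω => EuclideanSpace.real_norm_sq_eq _
  have hvar : ∀ i, Var[fun ω => X ω i; μ] = μ[Y i] := fun i => by
    rw [variance_eq_integral ((hX i).aemeasurable), ← hm i]
  have hrow : ∀ i, ∑ j, cov[Y i, Y j; μ] ≤ t := fun i => by
    simpa only [← cov_eq_covariance (hY i) (hY _)] using hcov i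
  simp_rw [hnorm, hvar]
  simpa only [div_eq_inv_mul] using measure_abs_sampleMean_sub_ge_le hY hrow hε

end SampleMean

theorem thin_shell_tendsto_general (t : ℝ) (ε : ℝ) (hε : 0 < ε)
    (Ω : ℕ → Type*) (mΩ : ∀ k, MeasurableSpace (Ω k)) (μ : ∀ k, Measure (Ω k))
    (hμ : ∀ k, IsProbabilityMeasure (μ k))
    (X : ∀ k : ℕ, Ω k → EuclideanSpace ℝ (Fin k))
    (hX : ∀ k (i : Fin k), MemLp (fun ω => X k ω i) 4 (μ k))
    (m : ∀ k : ℕ, EuclideanSpace ℝ (Fin k))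
    (hm : ∀ k (i : Fin k), m k i = ∫ ω, X k ω i ∂μ k)
    (v : ℕ → ℝ)
    (hv : ∀ k, v k = (1 / (k : ℝ)) * ∑ i, variance (fun ω => X k ω i) (μ k))
    (hcov : ∀ k (i : Fin k),
      ∑ j, cov (μ k) (fun ω => (X k ω i - m k i) ^ 2)
        (fun ω => (X k ω j - m k j) ^ 2) ≤ t) :
    Tendsto (fun k : ℕ => μ k {ω | ε ≤ |‖X k ω - m k‖ ^ 2 / (k : ℝ) - v k|})
      atTop (nhds 0) := by
  have hbound : ∀ k, μ k {ω | ε ≤ |‖X k ω - m k‖ ^ 2 / (k : ℝ) - v k|}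
      ≤ ENNReal.ofReal (t / ε ^ 2 / k) := fun k => by
    have := hμ k
    simpa only [hv k, one_div, Fintype.card_fin] using
      measure_abs_normSq_div_sub_ge_le (hX k) (hm k) (hcov k) hε
  have hlim : Tendsto (fun k : ℕ => ENNReal.ofReal (t / ε ^ 2 / k)) atTop (nhds 0) := by
    simpa using ENNReal.tendsto_ofReal (tendsto_const_div_atTop_nhds_zero_nat (t / ε ^ 2))
  exact tendsto_of_tendsto_of_tendsto_of_le_of_le tendsto_const_nhds hlim
    (fun _ => zero_le) hbound

/-- Asymptotic Theorem 1: with a uniform row-sum covariance bound `t` on the squared centered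
components, the probability that the normalized squared distance of `X⁽ᵏ⁾` from its mean
vector deviates from the average variance `v_k` by at least `ε` tends to `0` as `k → ∞`;
instances form a thin shell about the centroid. -/
theorem thin_shell_tendsto (t : ℝ) (ht : 0 ≤ t) (ε : ℝ) (hε : 0 < ε)
    (Ω : ℕ → Type*) (mΩ : ∀ k, MeasurableSpace (Ω k)) (μ : ∀ k, Measure (Ω k))
    (hμ : ∀ k, IsProbabilityMeasure (μ k))
    (X : ∀ k : ℕ, Ω k → EuclideanSpace ℝ (Fin k))
    (hX : ∀ k (i : Fin k), MemLp (fun ω => X k ω i) 4 (μ k))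
    (m : ∀ k : ℕ, EuclideanSpace ℝ (Fin k))
    (hm : ∀ k (i : Fin k), m k i = ∫ ω, X k ω i ∂μ k)
    (v : ℕ → ℝ)
    (hv : ∀ k, v k = (1 / (k : ℝ)) * ∑ i, variance (fun ω => X k ω i) (μ k))
    (hcov : ∀ k (i : Fin k),
      ∑ j, cov (μ k) (fun ω => (X k ω i - m k i) ^ 2)
        (fun ω => (X k ω j - m k j) ^ 2) ≤ t) :
    Tendsto (fun k : ℕ => μ k {ω | ε ≤ |‖X k ω - m k‖ ^ 2 / (k : ℝ) - v k|})
      atTop (nhds 0) :=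
  thin_shell_tendsto_general t ε hε Ω mΩ μ hμ X hX m hm v hv hcov
end

section
/- (Only-if direction of Theorem 2, exact form.) Let (Ω, μ) be a probability space, k a positive integer, and X₁, X₂, Y, Y' : Ω → ℝ^k random vectors with square-integrable components such that Y is identically distributed with X₁, Y' is identically distributed with X₂, and Y is independent of X₁ and of X₂, and Y' is independent of X₁ and of X₂ (as ℝ^k-valued random variables). If E[‖Y − X₁‖²] = E[‖Y − X₂‖²] and E[‖Y' − X₂‖²] = E[‖Y' − X₁‖²], then Var(X₁) = Var(X₂) and E(X₁) = E(X₂); i.e., X₁ and X₂ have the same mean vector and the same average variance, forming a distribution-cluster. -/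
/-!
For independent `Y`, `Z` with `Y` distributed as `X`, expanding the square coordinatewise gives
`E‖Y - Z‖² = V(X) + V(Z) + ‖E X - E Z‖²`, where `V` is the summed variance. The two hypotheses
thus read `2 V(X₁) = V(X₁) + V(X₂) + D` and `2 V(X₂) = V(X₁) + V(X₂) + D` with
`D = ‖E X₁ - E X₂‖²`; adding them gives `D = 0`, and then `V(X₁) = V(X₂)`.
-/

open MeasureTheory ProbabilityTheory

namespace ProbabilityTheory

variable {Ω : Type*} [MeasurableSpace Ω] {μ : Measure Ω} [IsProbabilityMeasure μ]

lemma IndepFun.integral_sub_sq {f g : Ω → ℝ} (hf : MemLp f 2 μ) (hg : MemLp g 2 μ)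
    (hfg : f ⟂ᵢ[μ] g) :
    ∫ ω, (f ω - g ω) ^ 2 ∂μ = Var[f; μ] + Var[g; μ] + (μ[f] - μ[g]) ^ 2 := by
  have h := variance_eq_sub (hf.sub hg)
  simp only [Pi.sub_apply, Pi.pow_apply] at h
  rw [variance_sub hf hg, hfg.covariance_eq_zero hf hg,
    integral_sub (hf.integrable one_le_two) (hg.integrable one_le_two)] at h
  linarith

variable {ι : Type*} [Fintype ι]

lemma IndepFun.integral_norm_sub_sq {X Y : Ω → EuclideanSpace ℝ ι}
    (hX : ∀ i, MemLp (fun ω ↦ X ω i) 2 μ) (hY : ∀ i, MemLp (fun ω ↦ Y ω i) 2 μ)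
    (hXY : X ⟂ᵢ[μ] Y) :
    ∫ ω, ‖X ω - Y ω‖ ^ 2 ∂μ = ∑ i, Var[fun ω ↦ X ω i; μ] + ∑ i, Var[fun ω ↦ Y ω i; μ]
      + ∑ i, (μ[fun ω ↦ X ω i] - μ[fun ω ↦ Y ω i]) ^ 2 := by
  have hcoord (i : ι) : Measurable fun x : EuclideanSpace ℝ ι ↦ x i := by fun_prop
  simp_rw [EuclideanSpace.real_norm_sq_eq, PiLp.sub_apply]
  rw [integral_finsetSum (f := fun i ω ↦ (X ω i - Y ω i) ^ 2) _
      fun i _ ↦ ((hX i).sub (hY i)).integrable_sq,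
    ← Finset.sum_add_distrib, ← Finset.sum_add_distrib]
  exact Finset.sum_congr rfl fun i _ ↦
    (hXY.comp (hcoord i) (hcoord i)).integral_sub_sq (hX i) (hY i)

lemma IdentDistrib.integral_norm_sub_sq {X Y Z : Ω → EuclideanSpace ℝ ι}
    (hYX : IdentDistrib Y X μ μ) (hX : ∀ i, MemLp (fun ω ↦ X ω i) 2 μ)
    (hZ : ∀ i, MemLp (fun ω ↦ Z ω i) 2 μ) (hYZ : Y ⟂ᵢ[μ] Z) :
    ∫ ω, ‖Y ω - Z ω‖ ^ 2 ∂μ = ∑ i, Var[fun ω ↦ X ω i; μ] + ∑ i, Var[fun ω ↦ Z ω i; μ]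
      + ∑ i, (μ[fun ω ↦ X ω i] - μ[fun ω ↦ Z ω i]) ^ 2 := by
  have hYX_coord (i : ι) : IdentDistrib (fun ω ↦ Y ω i) (fun ω ↦ X ω i) μ μ :=
    hYX.comp (u := fun x : EuclideanSpace ℝ ι ↦ x i) (by fun_prop)
  rw [hYZ.integral_norm_sub_sq (fun i ↦ (hYX_coord i).memLp_iff.2 (hX i)) hZ]
  simp only [fun i ↦ (hYX_coord i).variance_eq, fun i ↦ (hYX_coord i).integral_eq]

end ProbabilityTheory

theorem distribution_cluster_of_indicator_general {Ω : Type*} [MeasurableSpace Ω] (μ : Measure Ω)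
    [IsProbabilityMeasure μ] (k : ℕ)
    (X₁ X₂ Y Y' : Ω → EuclideanSpace ℝ (Fin k))
    (hX₁ : ∀ i, MemLp (fun ω => X₁ ω i) 2 μ) (hX₂ : ∀ i, MemLp (fun ω => X₂ ω i) 2 μ)
    (hid : IdentDistrib Y X₁ μ μ) (hid' : IdentDistrib Y' X₂ μ μ)
    (hYX₁ : IndepFun Y X₁ μ) (hYX₂ : IndepFun Y X₂ μ)
    (hY'X₁ : IndepFun Y' X₁ μ) (hY'X₂ : IndepFun Y' X₂ μ)
    (h1 : ∫ ω, ‖Y ω - X₁ ω‖ ^ 2 ∂μ = ∫ ω, ‖Y ω - X₂ ω‖ ^ 2 ∂μ)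
    (h2 : ∫ ω, ‖Y' ω - X₂ ω‖ ^ 2 ∂μ = ∫ ω, ‖Y' ω - X₁ ω‖ ^ 2 ∂μ) :
    (1 / (k : ℝ)) * ∑ i, variance (fun ω => X₁ ω i) μ =
        (1 / (k : ℝ)) * ∑ i, variance (fun ω => X₂ ω i) μ ∧
      (fun i => ∫ ω, X₁ ω i ∂μ) = (fun i => ∫ ω, X₂ ω i ∂μ) := by
  rw [hid.integral_norm_sub_sq hX₁ hX₁ hYX₁, hid.integral_norm_sub_sq hX₁ hX₂ hYX₂] at h1
  rw [hid'.integral_norm_sub_sq hX₂ hX₂ hY'X₂, hid'.integral_norm_sub_sq hX₂ hX₁ hY'X₁] at h2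
  simp only [sub_self, zero_pow two_ne_zero, Finset.sum_const_zero, add_zero] at h1 h2
  have hdist_comm : ∑ i, (μ[fun ω ↦ X₂ ω i] - μ[fun ω ↦ X₁ ω i]) ^ 2
      = ∑ i, (μ[fun ω ↦ X₁ ω i] - μ[fun ω ↦ X₂ ω i]) ^ 2 := by
    simp only [sub_sq_comm]
  have hdist : ∑ i, (μ[fun ω ↦ X₁ ω i] - μ[fun ω ↦ X₂ ω i]) ^ 2 = 0 := by linarith
  have hvar : ∑ i, Var[fun ω ↦ X₁ ω i; μ] = ∑ i, Var[fun ω ↦ X₂ ω i; μ] := by linarith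
  refine ⟨by rw [hvar], funext fun i ↦ ?_⟩
  have hsq := congrFun ((Fintype.sum_eq_zero_iff_of_nonneg fun i ↦ sq_nonneg _).1 hdist) i
  exact sub_eq_zero.1 (pow_eq_zero_iff two_ne_zero |>.1 hsq)

/-- Only-if direction of Theorem 2 (exact form): if `Y ~ X₁` and `Y' ~ X₂` are independent
copies and the cluster-indicator distances agree, i.e. `E[‖Y − X₁‖²] = E[‖Y − X₂‖²]` and
`E[‖Y' − X₂‖²] = E[‖Y' − X₁‖²]`, then `X₁` and `X₂` have the same average variance and the
same mean vector, i.e. they form a distribution-cluster. -/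
theorem distribution_cluster_of_indicator {Ω : Type*} [MeasurableSpace Ω] (μ : Measure Ω)
    [IsProbabilityMeasure μ] (k : ℕ) (hk : 0 < k)
    (X₁ X₂ Y Y' : Ω → EuclideanSpace ℝ (Fin k))
    (hX₁ : ∀ i, MemLp (fun ω => X₁ ω i) 2 μ) (hX₂ : ∀ i, MemLp (fun ω => X₂ ω i) 2 μ)
    (hY : ∀ i, MemLp (fun ω => Y ω i) 2 μ) (hY' : ∀ i, MemLp (fun ω => Y' ω i) 2 μ)
    (hid : IdentDistrib Y X₁ μ μ) (hid' : IdentDistrib Y' X₂ μ μ)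
    (hYX₁ : IndepFun Y X₁ μ) (hYX₂ : IndepFun Y X₂ μ)
    (hY'X₁ : IndepFun Y' X₁ μ) (hY'X₂ : IndepFun Y' X₂ μ)
    (h1 : ∫ ω, ‖Y ω - X₁ ω‖ ^ 2 ∂μ = ∫ ω, ‖Y ω - X₂ ω‖ ^ 2 ∂μ)
    (h2 : ∫ ω, ‖Y' ω - X₂ ω‖ ^ 2 ∂μ = ∫ ω, ‖Y' ω - X₁ ω‖ ^ 2 ∂μ) :
    (1 / (k : ℝ)) * ∑ i, variance (fun ω => X₁ ω i) μ =
        (1 / (k : ℝ)) * ∑ i, variance (fun ω => X₂ ω i) μ ∧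
      (fun i => ∫ ω, X₁ ω i ∂μ) = (fun i => ∫ ω, X₂ ω i ∂μ) :=
  distribution_cluster_of_indicator_general μ k X₁ X₂ Y Y' hX₁ hX₂ hid hid' hYX₁ hYX₂ hY'X₁ hY'X₂ h1
    h2
end

section
/- (Separability of overlapping clusters.) Let (Ω, μ) be a probability space, k a positive integer, and X, X', Y : Ω → ℝ^k mutually independent random vectors with components in L⁴(μ), where X and X' have the same mean vector m₁ and the same average variance v₁, and Y has mean vector m₂ and average variance v₂. Set Δ := v₂ − v₁ + d(m₁ − m₂) and assume Δ > 0. Suppose there are t₁, t₂ ≥ 0 such that for every coordinate a ≤ k, ∑_{b=1}^k cov((X_a − X'_a)², (X_b − X'_b)²) ≤ t₁ and ∑_{b=1}^k cov((X_a − Y_a)², (X_b − Y_b)²) ≤ t₂. Then μ{ ‖X − X'‖²/k ≥ ‖X − Y‖²/k } ≤ 4(t₁ + t₂)/(k·Δ²); i.e., with high probability in high dimension an instance of the first cluster is strictly closer to another instance of its own cluster than to an instance of the second cluster. -/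
/-!
Write `S = ‖X - X'‖²` and `T = ‖X - Y‖²`, each a sum of `k` squared coordinate differences.
By independence, `E[(U - V)²] = Var U + Var V + (E U - E V)²` coordinatewise, so
`E T - E S = k Δ`; the row-sum covariance bounds give `Var S ≤ k t₁` and `Var T ≤ k t₂`.
If `T ≤ S`, one of `S`, `T` lies at least `k Δ / 2` from its mean, and Chebyshev's inequality
bounds both events.
-/

open MeasureTheory ProbabilityTheory

open scoped ENNReal

lemma MeasureTheory.MemLp.sq {α : Type*} [MeasurableSpace α] {μ : Measure α} {f : α → ℝ}
    {p : ℝ≥0∞} (hf : MemLp f (2 * p) μ) : MemLp (fun x => f x ^ 2) p μ := by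
  have : ENNReal.HolderTriple (2 * p) (2 * p) p := ⟨by
    rw [ENNReal.mul_inv (by simp) (by simp), ← add_mul, ENNReal.inv_two_add_inv_two, one_mul]⟩
  simpa only [pow_two] using hf.mul' hf (r := p)

namespace ProbabilityTheory

lemma norm_sub_sq_eq_sum {α ι : Type*} [Fintype ι] (X Z : α → EuclideanSpace ℝ ι) :
    (fun x => ‖X x - Z x‖ ^ 2) = fun x => ∑ a, (X x a - Z x a) ^ 2 := by
  funext x
  simp [EuclideanSpace.real_norm_sq_eq]

variable {Ω ι : Type*} [MeasurableSpace Ω] {μ : Measure Ω} {X Z : Ω → EuclideanSpace ℝ ι}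

lemma memLp_coord_sub_sq (hX : ∀ a, MemLp (fun ω => X ω a) 4 μ)
    (hZ : ∀ a, MemLp (fun ω => Z ω a) 4 μ) (a : ι) :
    MemLp (fun ω => (X ω a - Z ω a) ^ 2) 2 μ :=
  MemLp.sq (by norm_num; exact (hX a).sub (hZ a))

variable [Fintype ι]

lemma memLp_norm_sub_sq (hX : ∀ a, MemLp (fun ω => X ω a) 4 μ)
    (hZ : ∀ a, MemLp (fun ω => Z ω a) 4 μ) : MemLp (fun ω => ‖X ω - Z ω‖ ^ 2) 2 μ := by
  rw [norm_sub_sq_eq_sum]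
  exact memLp_finsetSum _ fun a _ => memLp_coord_sub_sq hX hZ a

lemma meas_le_le_four_mul_variance_add_div_sq [IsFiniteMeasure μ] {S T : Ω → ℝ}
    (hS : MemLp S 2 μ) (hT : MemLp T 2 μ) (hST : μ[S] < μ[T]) :
    μ {ω | T ω ≤ S ω} ≤
      ENNReal.ofReal (4 * (variance S μ + variance T μ) / (μ[T] - μ[S]) ^ 2) := by
  set c := (μ[T] - μ[S]) / 2 with hc
  have hc_pos : 0 < c := by linarith
  have hsub : {ω | T ω ≤ S ω} ⊆ {ω | c ≤ |S ω - μ[S]|} ∪ {ω | c ≤ |T ω - μ[T]|} := by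
    intro ω hω
    by_contra hout
    simp only [Set.mem_union, Set.mem_ofPred_eq, not_or, not_le, abs_lt] at hω hout
    linarith
  calc μ {ω | T ω ≤ S ω}
      ≤ μ {ω | c ≤ |S ω - μ[S]|} + μ {ω | c ≤ |T ω - μ[T]|} :=
        (measure_mono hsub).trans (measure_union_le _ _)
    _ ≤ ENNReal.ofReal (variance S μ / c ^ 2) + ENNReal.ofReal (variance T μ / c ^ 2) :=
        add_le_add (meas_ge_le_variance_div_sq hS hc_pos) (meas_ge_le_variance_div_sq hT hc_pos)
    _ = ENNReal.ofReal (4 * (variance S μ + variance T μ) / (μ[T] - μ[S]) ^ 2) := by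
        rw [← ENNReal.ofReal_add (by have := variance_nonneg S μ; positivity)
          (by have := variance_nonneg T μ; positivity), hc]
        congr 1
        field_simp
        ring

variable [IsProbabilityMeasure μ]

lemma cov_eq_covariance {U V : Ω → ℝ} (hU : MemLp U 2 μ) (hV : MemLp V 2 μ) :
    cov μ U V = covariance U V μ :=
  (covariance_eq_sub hU hV).symm

lemma variance_fun_sum_le_card_mul {U : ι → Ω → ℝ} {t : ℝ}
    (hU : ∀ a, MemLp (U a) 2 μ) (ht : ∀ a, ∑ b, cov μ (U a) (U b) ≤ t) :
    variance (fun ω => ∑ a, U a ω) μ ≤ Fintype.card ι * t := by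
  rw [variance_fun_sum hU]
  calc ∑ a, ∑ b, covariance (U a) (U b) μ = ∑ a, ∑ b, cov μ (U a) (U b) := by
        simp only [cov_eq_covariance (hU _) (hU _)]
    _ ≤ ∑ _a : ι, t := Finset.sum_le_sum fun a _ => ht a
    _ = Fintype.card ι * t := by simp

lemma IndepFun.integral_sub_sq_s14 {U V : Ω → ℝ} (hU : MemLp U 2 μ) (hV : MemLp V 2 μ)
    (h : IndepFun U V μ) :
    ∫ ω, (U ω - V ω) ^ 2 ∂μ = variance U μ + variance V μ + (μ[U] - μ[V]) ^ 2 := by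
  have hvar := variance_eq_sub (hU.sub hV)
  rw [variance_sub hU hV, h.covariance_eq_zero hU hV] at hvar
  simp only [Pi.pow_apply, Pi.sub_apply] at hvar
  rw [integral_sub (hU.integrable one_le_two) (hV.integrable one_le_two)] at hvar
  linarith

lemma integral_norm_sub_sq {m m' : EuclideanSpace ℝ ι}
    (hX : ∀ a, MemLp (fun ω => X ω a) 2 μ) (hZ : ∀ a, MemLp (fun ω => Z ω a) 2 μ)
    (hmX : ∀ a, ∫ ω, X ω a ∂μ = m a) (hmZ : ∀ a, ∫ ω, Z ω a ∂μ = m' a) (h : IndepFun X Z μ) :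
    ∫ ω, ‖X ω - Z ω‖ ^ 2 ∂μ =
      ∑ a, variance (fun ω => X ω a) μ + ∑ a, variance (fun ω => Z ω a) μ + ‖m - m'‖ ^ 2 := by
  have hcoord (a : ι) : IndepFun (fun ω => X ω a) (fun ω => Z ω a) μ := by
    have := h.comp (φ := fun x => x a) (ψ := fun x => x a) (by fun_prop) (by fun_prop)
    exact this
  rw [norm_sub_sq_eq_sum, integral_finsetSum (f := fun a ω => (X ω a - Z ω a) ^ 2) _
      fun a _ => ((hX a).sub (hZ a)).integrable_sq,
    EuclideanSpace.real_norm_sq_eq, ← Finset.sum_add_distrib, ← Finset.sum_add_distrib]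
  refine Finset.sum_congr rfl fun a _ => ?_
  rw [(hcoord a).integral_sub_sq_s14 (hX a) (hZ a), hmX, hmZ, PiLp.sub_apply]

lemma variance_norm_sub_sq_le {t : ℝ} (hX : ∀ a, MemLp (fun ω => X ω a) 4 μ)
    (hZ : ∀ a, MemLp (fun ω => Z ω a) 4 μ)
    (ht : ∀ a, ∑ b, cov μ (fun ω => (X ω a - Z ω a) ^ 2) (fun ω => (X ω b - Z ω b) ^ 2) ≤ t) :
    variance (fun ω => ‖X ω - Z ω‖ ^ 2) μ ≤ Fintype.card ι * t := by
  rw [norm_sub_sq_eq_sum]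
  exact variance_fun_sum_le_card_mul (memLp_coord_sub_sq hX hZ) ht

end ProbabilityTheory

theorem cluster_separability_general {Ω : Type*} [MeasurableSpace Ω]
    (μ : Measure Ω) [IsProbabilityMeasure μ] (k : ℕ) (hk : 0 < k)
    (X X' Y : Ω → EuclideanSpace ℝ (Fin k))
    (hX : ∀ a : Fin k, MemLp (fun ω => X ω a) 4 μ)
    (hX' : ∀ a : Fin k, MemLp (fun ω => X' ω a) 4 μ)
    (hY : ∀ a : Fin k, MemLp (fun ω => Y ω a) 4 μ)
    (hindep : iIndepFun (m := fun _ : Fin 3 => (inferInstance :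
      MeasurableSpace (EuclideanSpace ℝ (Fin k)))) ![X, X', Y] μ)
    (m₁ m₂ : EuclideanSpace ℝ (Fin k)) (v₁ v₂ : ℝ)
    (hmX : ∀ a : Fin k, (∫ ω, X ω a ∂μ) = m₁ a)
    (hmX' : ∀ a : Fin k, (∫ ω, X' ω a ∂μ) = m₁ a)
    (hmY : ∀ a : Fin k, (∫ ω, Y ω a ∂μ) = m₂ a)
    (hvX' : (1 / (k : ℝ)) * ∑ a, variance (fun ω => X' ω a) μ = v₁)
    (hvY : (1 / (k : ℝ)) * ∑ a, variance (fun ω => Y ω a) μ = v₂)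
    (Δ : ℝ) (hΔdef : Δ = v₂ - v₁ + ‖m₁ - m₂‖ ^ 2 / (k : ℝ)) (hΔ : 0 < Δ)
    (t₁ t₂ : ℝ)
    (hcov₁ : ∀ a : Fin k,
      ∑ b, cov μ (fun ω => (X ω a - X' ω a) ^ 2) (fun ω => (X ω b - X' ω b) ^ 2) ≤ t₁)
    (hcov₂ : ∀ a : Fin k,
      ∑ b, cov μ (fun ω => (X ω a - Y ω a) ^ 2) (fun ω => (X ω b - Y ω b) ^ 2) ≤ t₂) :
    μ {ω | ‖X ω - Y ω‖ ^ 2 / (k : ℝ) ≤ ‖X ω - X' ω‖ ^ 2 / (k : ℝ)} ≤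
      ENNReal.ofReal (4 * (t₁ + t₂) / (k * Δ ^ 2)) := by
  have hk' : (0 : ℝ) < k := Nat.cast_pos.mpr hk
  have hL2 {Z : Ω → EuclideanSpace ℝ (Fin k)} (hZ : ∀ a : Fin k, MemLp (fun ω => Z ω a) 4 μ)
      (a : Fin k) : MemLp (fun ω => Z ω a) 2 μ := (hZ a).mono_exponent (by norm_num)
  have hXX' : IndepFun X X' μ := hindep.indepFun (i := 0) (j := 1) (by decide)
  have hXY : IndepFun X Y μ := hindep.indepFun (i := 0) (j := 2) (by decide)
  have hES := integral_norm_sub_sq (hL2 hX) (hL2 hX') hmX hmX' hXX'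
  have hET := integral_norm_sub_sq (hL2 hX) (hL2 hY) hmX hmY hXY
  have hgap : μ[fun ω => ‖X ω - Y ω‖ ^ 2] - μ[fun ω => ‖X ω - X' ω‖ ^ 2] = k * Δ := by
    rw [hES, hET, hΔdef, ← hvX', ← hvY, sub_self, norm_zero]
    field_simp
    ring
  have hVS := variance_norm_sub_sq_le hX hX' hcov₁
  have hVT := variance_norm_sub_sq_le hX hY hcov₂
  rw [Fintype.card_fin] at hVS hVT
  calc μ {ω | ‖X ω - Y ω‖ ^ 2 / (k : ℝ) ≤ ‖X ω - X' ω‖ ^ 2 / (k : ℝ)}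
      = μ {ω | ‖X ω - Y ω‖ ^ 2 ≤ ‖X ω - X' ω‖ ^ 2} := by
        simp only [div_le_div_iff_of_pos_right hk']
    _ ≤ ENNReal.ofReal (4 * (variance (fun ω => ‖X ω - X' ω‖ ^ 2) μ
          + variance (fun ω => ‖X ω - Y ω‖ ^ 2) μ) / (k * Δ) ^ 2) := by
        rw [← hgap]
        exact meas_le_le_four_mul_variance_add_div_sq (memLp_norm_sub_sq hX hX')
          (memLp_norm_sub_sq hX hY) (by rw [← sub_pos, hgap]; positivity)
    _ ≤ ENNReal.ofReal (4 * (t₁ + t₂) / (k * Δ ^ 2)) := by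
        refine ENNReal.ofReal_le_ofReal ?_
        calc 4 * (variance (fun ω => ‖X ω - X' ω‖ ^ 2) μ
              + variance (fun ω => ‖X ω - Y ω‖ ^ 2) μ) / (k * Δ) ^ 2
            ≤ 4 * (k * t₁ + k * t₂) / (k * Δ) ^ 2 := by gcongr
          _ = 4 * (t₁ + t₂) / (k * Δ ^ 2) := by field_simp

/-- Separability of overlapping clusters: let `X, X', Y : Ω → ℝᵏ` be mutually independent,
with `X, X'` from a cluster with mean `m₁` and average variance `v₁` and `Y` from a cluster
with mean `m₂` and average variance `v₂`. If `Δ = v₂ − v₁ + d(m₁ − m₂) > 0` and the row-sum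
covariance bounds `t₁` (for `(X − X')²` coordinates) and `t₂` (for `(X − Y)²` coordinates)
hold, then `X` fails to be strictly closer to `X'` than to `Y` with probability at most
`4(t₁ + t₂)/(k·Δ²)`. -/
theorem cluster_separability {Ω : Type*} [MeasurableSpace Ω]
    (μ : Measure Ω) [IsProbabilityMeasure μ] (k : ℕ) (hk : 0 < k)
    (X X' Y : Ω → EuclideanSpace ℝ (Fin k))
    (hX : ∀ a : Fin k, MemLp (fun ω => X ω a) 4 μ)
    (hX' : ∀ a : Fin k, MemLp (fun ω => X' ω a) 4 μ)
    (hY : ∀ a : Fin k, MemLp (fun ω => Y ω a) 4 μ)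
    (hindep : iIndepFun (m := fun _ : Fin 3 => (inferInstance :
      MeasurableSpace (EuclideanSpace ℝ (Fin k)))) ![X, X', Y] μ)
    (m₁ m₂ : EuclideanSpace ℝ (Fin k)) (v₁ v₂ : ℝ)
    (hmX : ∀ a : Fin k, (∫ ω, X ω a ∂μ) = m₁ a)
    (hmX' : ∀ a : Fin k, (∫ ω, X' ω a ∂μ) = m₁ a)
    (hmY : ∀ a : Fin k, (∫ ω, Y ω a ∂μ) = m₂ a)
    (hvX : (1 / (k : ℝ)) * ∑ a, variance (fun ω => X ω a) μ = v₁)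
    (hvX' : (1 / (k : ℝ)) * ∑ a, variance (fun ω => X' ω a) μ = v₁)
    (hvY : (1 / (k : ℝ)) * ∑ a, variance (fun ω => Y ω a) μ = v₂)
    (Δ : ℝ) (hΔdef : Δ = v₂ - v₁ + ‖m₁ - m₂‖ ^ 2 / (k : ℝ)) (hΔ : 0 < Δ)
    (t₁ t₂ : ℝ) (ht₁ : 0 ≤ t₁) (ht₂ : 0 ≤ t₂)
    (hcov₁ : ∀ a : Fin k,
      ∑ b, cov μ (fun ω => (X ω a - X' ω a) ^ 2) (fun ω => (X ω b - X' ω b) ^ 2) ≤ t₁)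
    (hcov₂ : ∀ a : Fin k,
      ∑ b, cov μ (fun ω => (X ω a - Y ω a) ^ 2) (fun ω => (X ω b - Y ω b) ^ 2) ≤ t₂) :
    μ {ω | ‖X ω - Y ω‖ ^ 2 / (k : ℝ) ≤ ‖X ω - X' ω‖ ^ 2 / (k : ℝ)} ≤
      ENNReal.ofReal (4 * (t₁ + t₂) / (k * Δ ^ 2)) :=
  cluster_separability_general μ k hk X X' Y hX hX' hY hindep m₁ m₂ v₁ v₂ hmX hmX' hmY hvX' hvY Δ
    hΔdef hΔ t₁ t₂ hcov₁ hcov₂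
end
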